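/- Under [ρ] = 0 (ρ_- = ρ_+ =: ρ), strict hyperbolicity gap u_+ + s/ρ ≤ u_- − s/ρ, and the condition s²|[v]|/ρ ≤ ½(λ₁(U_-) − λ₃(U_+))·[u] with λ₁(U_-) = u_- − s/ρ, λ₃(U_+) = u_+ + s/ρ and [u] = u_- − u_+ > 0, the delta-shock speed u_δ = (u_- + u_+)/2 + s²[v]/(2ρ[u]) satisfies the entropy condition u_+ + s/ρ ≤ u_δ ≤ u_- − s/ρ. -/
import Mathlib

/-- when [ρ] = 0, with the strict hyperbolicity gap and the
condition s²|[v]|/ρ ≤ ½(λ₁(U₋) − λ₃(U₊))[u], the delta-shock speed satisfies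
the entropy condition u₊ + s/ρ ≤ u_δ ≤ u₋ − s/ρ. -/
theorem sBB_delta_shock_entropy_equal_densities
    (s ρ um up vm vp : ℝ) (hs : 0 < s) (hρ : 0 < ρ)
    (hgap : up + s / ρ ≤ um - s / ρ)
    (hcond : s ^ 2 * |vm - vp| / ρ
      ≤ (1 / 2) * ((um - s / ρ) - (up + s / ρ)) * (um - up))
    (uδ : ℝ)
    (huδ : uδ = (um + up) / 2 + s ^ 2 * (vm - vp) / (2 * ρ * (um - up))) :
    up + s / ρ ≤ uδ ∧ uδ ≤ um - s / ρ := by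
  have hsρ : 0 < s / ρ := div_pos hs hρ
  have hD : 0 < um - up := by linarith
  have habs : |vm - vp| = vm - vp ∨ |vm - vp| = -(vm - vp) := abs_choice _
  subst huδ
  have key : s ^ 2 * |vm - vp| / (2 * ρ * (um - up))
      ≤ ((um - s / ρ) - (up + s / ρ)) / 4 := by
    rw [div_le_div_iff₀ (by positivity) (by norm_num)]
    have := hcond
    rw [div_le_iff₀ hρ] at this
    nlinarith
  have habs' : |s ^ 2 * (vm - vp) / (2 * ρ * (um - up))|
      = s ^ 2 * |vm - vp| / (2 * ρ * (um - up)) := by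
    rw [abs_div, abs_mul, abs_of_pos (by positivity : (0:ℝ) < 2 * ρ * (um - up)),
      abs_of_pos (by positivity : (0:ℝ) < s ^ 2)]
  have h1 := abs_le.mp (le_trans (le_of_eq habs') key)
  constructor <;> [nlinarith [h1.1]; nlinarith [h1.2]]
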